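/- Let P_{XY} be a joint pmf on finite alphabets 𝒳×𝒴 with P_X(x)>0 for every x∈𝒳, and fix y∈𝒴 with P_Y(y)>0. Let g:[0,1]→[0,∞) satisfy: g(0)=0, g is continuous at 0, and 0 < sup_{p∈[0,1]} g(p) < ∞. Then the pointwise maximal g-leakage satisfies sup over finite alphabets 𝒰 and channels P_{U|X} of log[ G_g(P_{U|Y=y}) / G_g(P_U) ] = max_{x:P_{X|Y}(x|y)>0} log[ P_{X|Y}(x|y)/P_X(x) ] = D_∞(P_{X|Y=y}‖P_X). Here P_{U|Y=y}(u)=Σ_x P_{X|Y}(x|y)P_{U|X}(u|x) and P_U(u)=Σ_x P_X(x)P_{U|X}(u|x). -/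

import Mathlib

open Finset

/-- A probability mass function on a finite type. -/
def IsPMF {α : Type*} [Fintype α] (p : α → ℝ) : Prop :=
  (∀ a, 0 ≤ p a) ∧ ∑ a, p a = 1

/-- A channel (row-stochastic kernel). -/
def IsChannel {X U : Type*} [Fintype U] (K : X → U → ℝ) : Prop :=
  ∀ x, IsPMF (K x)

/-- The pmf induced on `U` by a pmf `P` on `X` and a channel `K`. -/
noncomputable def push {X U : Type*} [Fintype X] (P : X → ℝ) (K : X → U → ℝ) : U → ℝ :=
  fun u => ∑ x, P x * K x u

/-- The maximal expected gain `G_g(R) = sup_{P̂} ∑_u R(u) g(P̂(u))`. -/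
noncomputable def maxGain {U : Type*} [Fintype U] (g : ℝ → ℝ) (R : U → ℝ) : ℝ :=
  sSup {v : ℝ | ∃ Ph : U → ℝ, IsPMF Ph ∧ v = ∑ u, R u * g (Ph u)}

/-- The Rényi divergence of order `∞`: `max_{x : P(x) > 0} log (P(x)/Q(x))`. -/
noncomputable def Dinf {X : Type*} [Fintype X] (P Q : X → ℝ) : ℝ :=
  sSup {v : ℝ | ∃ x, 0 < P x ∧ v = Real.log (P x / Q x)}

/-!
Write `A = P_{X|Y=y}` and `B = P_X`. Since `A ≤ exp D * B` pointwise with `D = D_∞(A‖B)`, the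
same holds after any channel, and as `g ≥ 0` the maximal gains inherit it:
`G_g(A K) ≤ exp D * G_g(B K)`.

For the converse, let `x₀` attain `D` and take the channel sending `x₀` to a private symbol and
spreading every other input uniformly over `N` further symbols. Guessing the private symbol with
probability `t`, where `g t` is close to `sup g`, gives `G_g(A K) ≳ A x₀ * sup g`. Continuity of
`g` at `0` yields `g t ≤ C t + ε`, so the atoms of `B K` of mass at most `1/N` contribute at most
`C / N + ε`, and `G_g(B K) ≲ B x₀ * sup g`. Hence the ratio approaches `A x₀ / B x₀ = exp D`.
-/

namespace IsPMF

variable {α : Type*} [Fintype α] {p : α → ℝ}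

lemma mem_Icc (hp : IsPMF p) (a : α) : p a ∈ Set.Icc (0 : ℝ) 1 :=
  ⟨hp.1 a, hp.2 ▸ single_le_sum (fun b _ => hp.1 b) (mem_univ a)⟩

lemma nonempty (hp : IsPMF p) : Nonempty α := by
  by_contra h
  simpa [not_nonempty_iff.mp h] using hp.2

lemma exists_pos (hp : IsPMF p) : ∃ a, 0 < p a := by
  by_contra! h
  have : ∑ a, p a = 0 := sum_eq_zero fun a _ => le_antisymm (h a) (hp.1 a)
  simp [hp.2] at this

lemma push {X : Type*} [Fintype X] {C : X → ℝ} (hC : IsPMF C) {K : X → α → ℝ}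
    (hK : IsChannel K) : IsPMF (_root_.push C K) := by
  refine ⟨fun u => sum_nonneg fun x _ => mul_nonneg (hC.1 x) ((hK x).1 u), ?_⟩
  simp only [_root_.push]
  rw [sum_comm]
  simp [← mul_sum, (hK _).2, hC.2]

end IsPMF

lemma isPMF_single_add_single {α : Type*} [Fintype α] [DecidableEq α] (a b : α) {t : ℝ}
    (ht : t ∈ Set.Icc (0 : ℝ) 1) : IsPMF (Pi.single a t + Pi.single b (1 - t)) := by
  refine ⟨fun c => add_nonneg ?_ ?_, by simp [sum_add_distrib, sum_pi_single']⟩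
  · by_cases h : c = a <;> simp [h, ht.1]
  · by_cases h : c = b <;> simp [h, ht.2]

lemma exists_forall_le_mul_add {g : ℝ → ℝ} {M : ℝ} (hgM : ∀ t ∈ Set.Icc (0 : ℝ) 1, g t ≤ M)
    (hg0 : g 0 = 0) (hgc : ContinuousWithinAt g (Set.Icc (0 : ℝ) 1) 0) {ε : ℝ} (hε : 0 < ε) :
    ∃ C, 0 ≤ C ∧ ∀ t ∈ Set.Icc (0 : ℝ) 1, g t ≤ C * t + ε := by
  obtain ⟨δ, hδ, hgδ⟩ := Metric.continuousWithinAt_iff.1 hgc ε hε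
  refine ⟨|M| / δ, by positivity, fun t ht => ?_⟩
  rcases lt_or_ge t δ with htδ | htδ
  · have := hgδ ht (by rwa [Real.dist_eq, sub_zero, abs_of_nonneg ht.1])
    rw [hg0, Real.dist_eq, sub_zero] at this
    nlinarith [le_abs_self (g t), ht.1, (by positivity : 0 ≤ |M| / δ)]
  · calc g t ≤ |M| := (hgM t ht).trans (le_abs_self M)
      _ = |M| / δ * δ := (div_mul_cancel₀ _ hδ.ne').symm
      _ ≤ |M| / δ * t + ε := by nlinarith [(by positivity : 0 ≤ |M| / δ)]

section Gain

variable {U : Type*} [Fintype U] {g : ℝ → ℝ} {M : ℝ} {R Ph : U → ℝ}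

lemma sum_mul_gain_le (hgM : ∀ t ∈ Set.Icc (0 : ℝ) 1, g t ≤ M) (hR : IsPMF R)
    (hPh : IsPMF Ph) : ∑ u, R u * g (Ph u) ≤ M :=
  calc ∑ u, R u * g (Ph u) ≤ ∑ u, R u * M :=
        sum_le_sum fun u _ => mul_le_mul_of_nonneg_left (hgM _ (hPh.mem_Icc u)) (hR.1 u)
    _ = M := by rw [← sum_mul, hR.2, one_mul]

lemma le_maxGain (hgM : ∀ t ∈ Set.Icc (0 : ℝ) 1, g t ≤ M) (hR : IsPMF R) (hPh : IsPMF Ph) :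
    ∑ u, R u * g (Ph u) ≤ maxGain g R :=
  le_csSup ⟨M, by rintro v ⟨Ph, hPh, rfl⟩; exact sum_mul_gain_le hgM hR hPh⟩ ⟨Ph, hPh, rfl⟩

lemma mul_gain_le_maxGain (hgnn : ∀ t ∈ Set.Icc (0 : ℝ) 1, 0 ≤ g t)
    (hgM : ∀ t ∈ Set.Icc (0 : ℝ) 1, g t ≤ M) (hR : IsPMF R) (hPh : IsPMF Ph) (u : U) :
    R u * g (Ph u) ≤ maxGain g R :=
  (single_le_sum (f := fun u => R u * g (Ph u))
    (fun v _ => mul_nonneg (hR.1 v) (hgnn _ (hPh.mem_Icc v))) (mem_univ u)).trans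
    (le_maxGain hgM hR hPh)

lemma maxGain_le [Nonempty U] {a : ℝ} (h : ∀ Ph : U → ℝ, IsPMF Ph → ∑ u, R u * g (Ph u) ≤ a) :
    maxGain g R ≤ a := by
  classical
  let u := Classical.arbitrary U
  refine csSup_le ⟨_, _, isPMF_single_add_single u u ⟨zero_le_one, le_rfl⟩, rfl⟩ ?_
  rintro v ⟨Ph, hPh, rfl⟩
  exact h Ph hPh

lemma maxGain_le_mul_maxGain (hgnn : ∀ t ∈ Set.Icc (0 : ℝ) 1, 0 ≤ g t)
    (hgM : ∀ t ∈ Set.Icc (0 : ℝ) 1, g t ≤ M) {S : U → ℝ} (hS : IsPMF S) {c : ℝ} (hc : 0 ≤ c)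
    (hRS : ∀ u, R u ≤ c * S u) : maxGain g R ≤ c * maxGain g S := by
  have := hS.nonempty
  refine maxGain_le fun Ph hPh => ?_
  calc ∑ u, R u * g (Ph u) ≤ ∑ u, c * S u * g (Ph u) :=
        sum_le_sum fun u _ => mul_le_mul_of_nonneg_right (hRS u) (hgnn _ (hPh.mem_Icc u))
    _ = c * ∑ u, S u * g (Ph u) := by simp only [mul_sum, mul_assoc]
    _ ≤ c * maxGain g S := mul_le_mul_of_nonneg_left (le_maxGain hgM hS hPh) hc

lemma maxGain_nonneg (hgnn : ∀ t ∈ Set.Icc (0 : ℝ) 1, 0 ≤ g t) (hR : ∀ u, 0 ≤ R u) :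
    0 ≤ maxGain g R :=
  Real.sSup_nonneg <| by
    rintro v ⟨Ph, hPh, rfl⟩
    exact sum_nonneg fun u _ => mul_nonneg (hR u) (hgnn _ (hPh.mem_Icc u))

lemma maxGain_le_of_forall_ne_le {C ε η : ℝ} (hgM : ∀ t ∈ Set.Icc (0 : ℝ) 1, g t ≤ M) (hC : 0 ≤ C)
    (hgC : ∀ t ∈ Set.Icc (0 : ℝ) 1, g t ≤ C * t + ε) (hε : 0 ≤ ε) (hη : 0 ≤ η)
    (hR : IsPMF R) (u₀ : U) (hRη : ∀ u ≠ u₀, R u ≤ η) :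
    maxGain g R ≤ M * R u₀ + C * η + ε := by
  classical
  have := hR.nonempty
  refine maxGain_le fun Ph hPh => ?_
  have hpt : ∀ u, R u * g (Ph u) ≤
      (if u = u₀ then M * R u₀ else 0) + C * η * Ph u + ε * R u := by
    intro u
    have hPhu := hPh.mem_Icc u
    by_cases hu : u = u₀
    · subst hu
      have := mul_le_mul_of_nonneg_left (hgM _ hPhu) (hR.1 u)
      rw [if_pos rfl]
      nlinarith [mul_nonneg (mul_nonneg hC hη) hPhu.1, mul_nonneg hε (hR.1 u)]
    · have := mul_le_mul_of_nonneg_left (hgC _ hPhu) (hR.1 u)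
      have := mul_le_mul_of_nonneg_right (hRη u hu) (mul_nonneg hC hPhu.1)
      simp only [if_neg hu]
      nlinarith
  calc ∑ u, R u * g (Ph u)
      ≤ ∑ u, ((if u = u₀ then M * R u₀ else 0) + C * η * Ph u + ε * R u) :=
        sum_le_sum fun u _ => hpt u
    _ = M * R u₀ + C * η + ε := by
      simp only [sum_add_distrib, sum_ite_eq', mem_univ, if_true, ← mul_sum, hPh.2, hR.2, mul_one]

end Gain

section Dinf

variable {X : Type*} [Fintype X] {P Q : X → ℝ}

lemma finite_Dinf_set : {v : ℝ | ∃ x, 0 < P x ∧ v = Real.log (P x / Q x)}.Finite :=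
  (Set.finite_range fun x => Real.log (P x / Q x)).subset <| by
    rintro _ ⟨x, -, rfl⟩
    exact ⟨x, rfl⟩

lemma log_div_le_Dinf {x : X} (hx : 0 < P x) : Real.log (P x / Q x) ≤ Dinf P Q :=
  le_csSup finite_Dinf_set.bddAbove ⟨x, hx, rfl⟩

lemma exists_eq_Dinf (h : ∃ x, 0 < P x) : ∃ x, 0 < P x ∧ Dinf P Q = Real.log (P x / Q x) :=
  let ⟨x, hx⟩ := h
  Set.Nonempty.csSup_mem (s := {v | ∃ x, 0 < P x ∧ v = Real.log (P x / Q x)}) ⟨_, x, hx, rfl⟩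
    finite_Dinf_set

lemma le_exp_Dinf_mul (hP : ∀ x, 0 ≤ P x) {x : X} (hQ : 0 < Q x) :
    P x ≤ Real.exp (Dinf P Q) * Q x := by
  rcases (hP x).eq_or_lt with h | h
  · rw [← h]
    positivity
  · rw [← div_le_iff₀ hQ, ← Real.log_le_iff_le_exp (div_pos h hQ)]
    exact log_div_le_Dinf h

lemma Dinf_nonneg (hP : IsPMF P) (hQ : IsPMF Q) : 0 ≤ Dinf P Q := by
  obtain ⟨x, hPx, hQx⟩ : ∃ x, 0 < P x ∧ Q x ≤ P x := by
    by_contra! h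
    obtain ⟨x₀, hx₀⟩ := hP.exists_pos
    have : ∑ x, P x < ∑ x, Q x := Finset.sum_lt_sum
      (fun x _ => (hP.1 x).eq_or_lt.elim (fun h0 => h0 ▸ hQ.1 x) (fun h0 => (h x h0).le))
      ⟨x₀, mem_univ x₀, h x₀ hx₀⟩
    simp [hP.2, hQ.2] at this
  rcases (hQ.1 x).eq_or_lt with h0 | h0
  · simpa [← h0] using log_div_le_Dinf (Q := Q) hPx
  · exact (Real.log_nonneg ((one_le_div h0).2 hQx)).trans (log_div_le_Dinf hPx)

end Dinf

section SplitChannel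

variable {X : Type*} [DecidableEq X]

noncomputable def splitChannel (x₀ : X) (N : ℕ) : X → Option (Fin N) → ℝ
  | x, none => if x = x₀ then 1 else 0
  | x, some _ => if x = x₀ then 0 else (N : ℝ)⁻¹

lemma isChannel_splitChannel (x₀ : X) {N : ℕ} (hN : 0 < N) : IsChannel (splitChannel x₀ N) := by
  intro x
  refine ⟨fun u => ?_, ?_⟩
  · cases u <;> simp only [splitChannel] <;> split_ifs <;> positivity
  · by_cases hx : x = x₀ <;> simp [splitChannel, hx, Fintype.sum_option, hN.ne']

lemma push_splitChannel_none [Fintype X] (C : X → ℝ) (x₀ : X) (N : ℕ) :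
    push C (splitChannel x₀ N) none = C x₀ := by
  simp [push, splitChannel]

lemma push_splitChannel_some [Fintype X] (C : X → ℝ) (x₀ : X) (N : ℕ) (i : Fin N) :
    push C (splitChannel x₀ N) (some i) = (∑ x, C x - C x₀) / N := by
  simp only [push, splitChannel, mul_ite, mul_zero]
  rw [← add_sum_erase _ _ (mem_univ x₀)]
  simp [sum_ite_of_false, div_eq_mul_inv, sub_mul, sum_mul]

end SplitChannel

section Leakage

variable {X : Type*} [Fintype X] {g : ℝ → ℝ} {M : ℝ} {A B : X → ℝ}

lemma log_maxGain_div_le_Dinf {U : Type*} [Fintype U] (hgnn : ∀ t ∈ Set.Icc (0 : ℝ) 1, 0 ≤ g t)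
    (hgM : ∀ t ∈ Set.Icc (0 : ℝ) 1, g t ≤ M) (hA : IsPMF A) (hB : IsPMF B)
    (hBpos : ∀ x, 0 < B x) {K : X → U → ℝ} (hK : IsChannel K) :
    Real.log (maxGain g (push A K) / maxGain g (push B K)) ≤ Dinf A B := by
  have hpush : ∀ u, push A K u ≤ Real.exp (Dinf A B) * push B K u := fun u => by
    simp only [push, mul_sum, ← mul_assoc]
    exact sum_le_sum fun x _ =>
      mul_le_mul_of_nonneg_right (le_exp_Dinf_mul hA.1 (hBpos x)) ((hK x).1 u)
  have hratio : maxGain g (push A K) / maxGain g (push B K) ≤ Real.exp (Dinf A B) :=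
    div_le_of_le_mul₀ (maxGain_nonneg hgnn (hB.push hK).1) (Real.exp_pos _).le
      (maxGain_le_mul_maxGain hgnn hgM (hB.push hK) (Real.exp_pos _).le hpush)
  rcases (div_nonneg (maxGain_nonneg hgnn (hA.push hK).1)
    (maxGain_nonneg hgnn (hB.push hK).1)).eq_or_lt with h | h
  · rw [← h, Real.log_zero]
    exact Dinf_nonneg hA hB
  · exact (Real.log_le_iff_le_exp h).2 hratio

variable [DecidableEq X]

lemma le_maxGain_push_splitChannel (hgnn : ∀ t ∈ Set.Icc (0 : ℝ) 1, 0 ≤ g t)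
    (hgM : ∀ t ∈ Set.Icc (0 : ℝ) 1, g t ≤ M) (hA : IsPMF A) (x₀ : X) {N : ℕ} (hN : 0 < N)
    {t : ℝ} (ht : t ∈ Set.Icc (0 : ℝ) 1) :
    A x₀ * g t ≤ maxGain g (push A (splitChannel x₀ N)) := by
  simpa [push_splitChannel_none] using mul_gain_le_maxGain hgnn hgM
    (hA.push (isChannel_splitChannel x₀ hN)) (isPMF_single_add_single none (some ⟨0, hN⟩) ht) none

lemma maxGain_push_splitChannel_le {C ε : ℝ} (hgM : ∀ t ∈ Set.Icc (0 : ℝ) 1, g t ≤ M)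
    (hC : 0 ≤ C) (hgC : ∀ t ∈ Set.Icc (0 : ℝ) 1, g t ≤ C * t + ε) (hε : 0 ≤ ε)
    (hB : IsPMF B) (x₀ : X) {N : ℕ} (hN : 0 < N) :
    maxGain g (push B (splitChannel x₀ N)) ≤ M * B x₀ + C * (N : ℝ)⁻¹ + ε := by
  rw [← push_splitChannel_none B x₀ N]
  refine maxGain_le_of_forall_ne_le hgM hC hgC hε (by positivity)
    (hB.push (isChannel_splitChannel x₀ hN)) none fun u hu => ?_
  obtain ⟨i, rfl⟩ := Option.ne_none_iff_exists'.1 hu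
  rw [push_splitChannel_some, hB.2, div_eq_mul_inv]
  exact mul_le_of_le_one_left (by positivity) (sub_le_self _ (hB.1 x₀))

lemma exists_lt_log_maxGain_push_splitChannel_div (hgnn : ∀ t ∈ Set.Icc (0 : ℝ) 1, 0 ≤ g t)
    (hg0 : g 0 = 0) (hgc : ContinuousWithinAt g (Set.Icc (0 : ℝ) 1) 0)
    (hgb : BddAbove (g '' Set.Icc (0 : ℝ) 1)) (hgpos : 0 < sSup (g '' Set.Icc (0 : ℝ) 1))
    (hA : IsPMF A) (hB : IsPMF B) {x₀ : X} (hAx₀ : 0 < A x₀) (hBx₀ : 0 < B x₀) {b : ℝ}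
    (hb : b < Real.log (A x₀ / B x₀)) :
    ∃ N, 0 < N ∧ b < Real.log (maxGain g (push A (splitChannel x₀ N)) /
      maxGain g (push B (splitChannel x₀ N))) := by
  set M := sSup (g '' Set.Icc (0 : ℝ) 1)
  have hgM : ∀ t ∈ Set.Icc (0 : ℝ) 1, g t ≤ M := fun t ht =>
    le_csSup hgb (Set.mem_image_of_mem g ht)
  set E := Real.exp b
  have hE : E * B x₀ < A x₀ := by
    rw [← lt_div_iff₀ hBx₀]
    exact (Real.lt_log_iff_exp_lt (div_pos hAx₀ hBx₀)).1 hb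
  -- `ε` is small enough that `E * (M * B x₀ + 2 * ε) < A x₀ * (M - ε)`.
  obtain ⟨ε, hε, hεgap⟩ := exists_pos_mul_lt (mul_pos hgpos (sub_pos.2 hE)) (2 * E + A x₀)
  obtain ⟨C, hC, hgC⟩ := exists_forall_le_mul_add hgM hg0 hgc hε
  obtain ⟨_, ⟨t, ht, rfl⟩, hgt⟩ :=
    exists_lt_of_lt_csSup ((Set.nonempty_Icc.2 zero_le_one).image g) (sub_lt_self M hε)
  obtain ⟨N, hN⟩ := exists_nat_gt (C / ε)
  have hN0 : 0 < N := by exact_mod_cast (div_nonneg hC hε.le).trans_lt hN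
  have hCN : C * (N : ℝ)⁻¹ ≤ ε := by
    rw [← div_eq_mul_inv, div_le_iff₀ (Nat.cast_pos.2 hN0)]
    rw [div_lt_iff₀ hε] at hN
    linarith
  refine ⟨N, hN0, ?_⟩
  have hGA := le_maxGain_push_splitChannel hgnn hgM hA x₀ hN0 ht
  have hGB := maxGain_push_splitChannel_le hgM hC hgC hε.le hB x₀ hN0
  have hGB' := le_maxGain_push_splitChannel hgnn hgM hB x₀ hN0 ht
  set GA := maxGain g (push A (splitChannel x₀ N))
  set GB := maxGain g (push B (splitChannel x₀ N))
  have hgap : E * (M * B x₀ + 2 * ε) < A x₀ * g t :=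
    calc E * (M * B x₀ + 2 * ε) < A x₀ * (M - ε) := by linear_combination hεgap
      _ ≤ A x₀ * g t := by gcongr
  have hgt0 : 0 < g t := pos_of_mul_pos_right ((by positivity : (0 : ℝ) < _).trans hgap) hAx₀.le
  have hGBpos : 0 < GB := (mul_pos hBx₀ hgt0).trans_le hGB'
  have hEGB : E * GB < GA :=
    calc E * GB ≤ E * (M * B x₀ + 2 * ε) := by gcongr; linarith
      _ < GA := hgap.trans_le hGA
  rw [Real.lt_log_iff_exp_lt (div_pos ((by positivity : 0 < E * GB).trans hEGB) hGBpos),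
    lt_div_iff₀ hGBpos]
  exact hEGB

end Leakage

/-- Under mild regularity assumptions on the gain function `g`, the pointwise
maximal `g`-leakage at `y` equals `D_∞(P_{X|Y=y} ‖ P_X)`:
`sup_{U,P_{U|X}} log (G_g(P_{U|Y=y})/G_g(P_U)) = max_{x : P_{X|Y}(x|y)>0} log (P_{X|Y}(x|y)/P_X(x))`. -/
theorem stmt9 {X Y : Type} [Fintype X] [Fintype Y]
    (P : X → Y → ℝ) (hP : IsPMF (fun z : X × Y => P z.1 z.2))
    (hPX : ∀ x, 0 < ∑ y, P x y)
    (y : Y) (hy : 0 < ∑ x, P x y)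
    (g : ℝ → ℝ)
    (hgnn : ∀ t ∈ Set.Icc (0:ℝ) 1, 0 ≤ g t)
    (hg0 : g 0 = 0)
    (hgc : ContinuousWithinAt g (Set.Icc (0:ℝ) 1) 0)
    (hgb : BddAbove (g '' Set.Icc (0:ℝ) 1))
    (hgpos : 0 < sSup (g '' Set.Icc (0:ℝ) 1)) :
    IsLUB
      {r : ℝ | ∃ (U : Type) (iU : Fintype U) (K : X → U → ℝ),
        @IsChannel X U iU K ∧
        r = Real.log (@maxGain U iU g (push (fun x => P x y / ∑ x', P x' y) K) /
            @maxGain U iU g (push (fun x => ∑ y', P x y') K))}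
      (Dinf (fun x => P x y / ∑ x', P x' y) (fun x => ∑ y', P x y')) := by
  classical
  have hA : IsPMF fun x => P x y / ∑ x', P x' y :=
    ⟨fun x => div_nonneg (hP.1 (x, y)) hy.le, by rw [← sum_div, div_self hy.ne']⟩
  have hB : IsPMF fun x => ∑ y', P x y' :=
    ⟨fun x => (hPX x).le, by rw [← hP.2, Fintype.sum_prod_type]⟩
  refine ⟨?_, fun b hb => ?_⟩
  · rintro r ⟨U, iU, K, hK, rfl⟩
    exact log_maxGain_div_le_Dinf hgnn (fun t ht => le_csSup hgb (Set.mem_image_of_mem g ht))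
      hA hB hPX hK
  · by_contra! hlt
    obtain ⟨x₀, hx₀, hD⟩ := exists_eq_Dinf (Q := fun x => ∑ y', P x y') hA.exists_pos
    obtain ⟨N, hN, hbN⟩ := exists_lt_log_maxGain_push_splitChannel_div hgnn hg0 hgc hgb hgpos
      hA hB hx₀ (hPX x₀) (hD ▸ hlt)
    exact (hb ⟨_, _, _, isChannel_splitChannel x₀ hN, rfl⟩).not_gt hbN
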